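/- arXiv:2602.10012 — 4 statements merged into one kernel-verified Lean document; each statement's English description precedes it below -/
import Mathlib

section
/- If p₁ stochastically dominates p₀ (i.e., Σ_{l≤k} p₁(l) ≤ Σ_{l≤k} p₀(l) for all k, where larger ranks are more desirable), then D(p₁,p₀) ≥ 1/2. -/
/-!
Splitting the product measure along `l < k`, `l > k`, `l = k` gives
`DOOR p₁ p₀ + DOOR p₀ p₁ = 1`, so it suffices that `P(X₁ < X₀) ≤ P(X₀ < X₁)` for independent
`X₁ ∼ p₁`, `X₀ ∼ p₀`. With an independent copy `X₀'` of `X₀`, stochastic dominance gives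
`P(X₁ < X₀) ≤ P(X₀' < X₀) = P(X₀ < X₀') ≤ P(X₀ < X₁)`: conditioning on the `p₀`-variable,
the first step compares the strict CDFs and the second the strict tails of `p₁` and `p₀`.
-/

open Finset

noncomputable def DOOR {K : ℕ} (p1 p0 : Fin K → ℝ) : ℝ :=
  (∑ k, p1 k * ∑ l ∈ Finset.Iio k, p0 l) + (1 / 2) * ∑ k, p1 k * p0 k

namespace Finset

variable {α M R : Type*} [LinearOrder α]

section Split

variable [AddCommMonoid M] [LocallyFiniteOrderBot α] [LocallyFiniteOrderTop α] [Fintype α]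

theorem sum_Iic_add_sum_Ioi (f : α → M) (k : α) :
    ∑ l ∈ Iic k, f l + ∑ l ∈ Ioi k, f l = ∑ l, f l := by
  rw [← filter_ge_eq_Iic, ← filter_lt_eq_Ioi]
  simp_rw [← not_le]
  exact sum_filter_add_sum_filter_not _ _ _

theorem sum_Iio_add_add_sum_Ioi (f : α → M) (k : α) :
    ∑ l ∈ Iio k, f l + f k + ∑ l ∈ Ioi k, f l = ∑ l, f l := by
  rw [← sum_Iic_add_sum_Ioi f k, ← Iio_insert, sum_insert (by simp), add_comm (f k)]

end Split

section Pairing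

variable [CommSemiring R] [LocallyFiniteOrderBot α] [LocallyFiniteOrderTop α] [Fintype α]

theorem sum_mul_sum_Iio_eq_sum_mul_sum_Ioi (p q : α → R) :
    ∑ k, p k * ∑ l ∈ Iio k, q l = ∑ l, q l * ∑ k ∈ Ioi l, p k := by
  simp_rw [mul_sum]
  refine (sum_comm' fun k l => ?_).trans
    (sum_congr rfl fun l _ => sum_congr rfl fun k _ => mul_comm _ _)
  simp

theorem sum_mul_sum_Iio_add_sum_mul_sum_Iio_add_sum_mul (p q : α → R) :
    ∑ k, p k * ∑ l ∈ Iio k, q l + ∑ k, q k * ∑ l ∈ Iio k, p l + ∑ k, p k * q k =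
      (∑ k, p k) * ∑ k, q k := by
  calc _ = ∑ k, p k * (∑ l ∈ Iio k, q l + q k + ∑ l ∈ Ioi k, q l) := by
          rw [sum_mul_sum_Iio_eq_sum_mul_sum_Ioi q p]
          simp only [mul_add, sum_add_distrib]
          ring
    _ = (∑ k, p k) * ∑ k, q k := by simp only [sum_Iio_add_add_sum_Ioi, sum_mul]

end Pairing

theorem sum_Iio_le_sum_Iio_of_sum_Iic_le [AddCommMonoid M] [Preorder M] [LocallyFiniteOrderBot α]
    {p q : α → M} (hle : ∀ k, ∑ l ∈ Iic k, p l ≤ ∑ l ∈ Iic k, q l) (k : α) :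
    ∑ l ∈ Iio k, p l ≤ ∑ l ∈ Iio k, q l := by
  rcases (Iio k).eq_empty_or_nonempty with hk | hk
  · simp [hk]
  · have hIio : Iio k = Iic ((Iio k).max' hk) := by
      ext l
      exact ⟨fun hl => mem_Iic.2 (le_max' _ l hl),
        fun hl => mem_Iio.2 ((mem_Iic.1 hl).trans_lt (mem_Iio.1 (max'_mem _ hk)))⟩
    rw [hIio]
    exact hle _

theorem sum_Ioi_le_sum_Ioi_of_sum_Iic_le [AddCommGroup M] [PartialOrder M] [IsOrderedAddMonoid M]
    [LocallyFiniteOrderBot α] [LocallyFiniteOrderTop α] [Fintype α] {p q : α → M}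
    (hsum : ∑ l, p l = ∑ l, q l)
    (hle : ∀ k, ∑ l ∈ Iic k, p l ≤ ∑ l ∈ Iic k, q l) (k : α) :
    ∑ l ∈ Ioi k, q l ≤ ∑ l ∈ Ioi k, p l := by
  rw [eq_sub_of_add_eq' (sum_Iic_add_sum_Ioi p k), eq_sub_of_add_eq' (sum_Iic_add_sum_Ioi q k),
    hsum]
  exact sub_le_sub_left (hle k) _

end Finset

theorem DOOR_add_DOOR_swap {K : ℕ} (p q : Fin K → ℝ) :
    DOOR p q + DOOR q p = (∑ k, p k) * ∑ k, q k := by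
  rw [← sum_mul_sum_Iio_add_sum_mul_sum_Iio_add_sum_mul, DOOR, DOOR]
  simp only [mul_comm (q _) (p _)]
  ring

theorem DOOR_swap_le_DOOR {K : ℕ} {p1 p0 : Fin K → ℝ} (h0nonneg : ∀ k, 0 ≤ p0 k)
    (hsum : ∑ k, p1 k = ∑ k, p0 k)
    (hdom : ∀ k, ∑ l ∈ Iic k, p1 l ≤ ∑ l ∈ Iic k, p0 l) :
    DOOR p0 p1 ≤ DOOR p1 p0 := by
  have hties : ∑ k, p0 k * p1 k = ∑ k, p1 k * p0 k := by simp only [mul_comm]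
  rw [DOOR, DOOR, hties, add_le_add_iff_right]
  calc ∑ k, p0 k * ∑ l ∈ Iio k, p1 l
      ≤ ∑ k, p0 k * ∑ l ∈ Iio k, p0 l := by
        refine sum_le_sum fun k _ => ?_
        exact mul_le_mul_of_nonneg_left (sum_Iio_le_sum_Iio_of_sum_Iic_le hdom k) (h0nonneg k)
    _ = ∑ l, p0 l * ∑ k ∈ Ioi l, p0 k := sum_mul_sum_Iio_eq_sum_mul_sum_Ioi p0 p0
    _ ≤ ∑ l, p0 l * ∑ k ∈ Ioi l, p1 k := by
        refine sum_le_sum fun l _ => ?_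
        exact mul_le_mul_of_nonneg_left (sum_Ioi_le_sum_Ioi_of_sum_Iic_le hsum hdom l) (h0nonneg l)
    _ = ∑ k, p1 k * ∑ l ∈ Iio k, p0 l := (sum_mul_sum_Iio_eq_sum_mul_sum_Ioi p1 p0).symm

theorem door_ge_half_of_stochDom_general {K : ℕ} (p1 p0 : Fin K → ℝ)
    (h0nonneg : ∀ k, 0 ≤ p0 k)
    (h1sum : ∑ k, p1 k = 1) (h0sum : ∑ k, p0 k = 1)
    (hdom : ∀ k : Fin K, ∑ l ∈ Finset.Iic k, p1 l ≤ ∑ l ∈ Finset.Iic k, p0 l) :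
    1 / 2 ≤ DOOR p1 p0 := by
  have htotal := DOOR_add_DOOR_swap p1 p0
  rw [h1sum, h0sum, one_mul] at htotal
  have hswap := DOOR_swap_le_DOOR h0nonneg (h1sum.trans h0sum.symm) hdom
  linarith

/-- if `p₁` stochastically dominates `p₀` (its CDF is pointwise at most
that of `p₀`), then the DOOR probability is at least 1/2. -/
theorem door_ge_half_of_stochDom {K : ℕ} (p1 p0 : Fin K → ℝ)
    (h1nonneg : ∀ k, 0 ≤ p1 k) (h0nonneg : ∀ k, 0 ≤ p0 k)
    (h1sum : ∑ k, p1 k = 1) (h0sum : ∑ k, p0 k = 1)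
    (hdom : ∀ k : Fin K, ∑ l ∈ Finset.Iic k, p1 l ≤ ∑ l ∈ Finset.Iic k, p0 l) :
    1 / 2 ≤ DOOR p1 p0 :=
  door_ge_half_of_stochDom_general p1 p0 h0nonneg h1sum h0sum hdom
end

section
/- Double robustness (propensity model correct): if π(X) = P(Z=1|X) is the true propensity score and m(X) is any (possibly misspecified) bounded function, then E[ Z·1{Y=k}/π(X) − ((Z−π(X))/π(X))·m(X) ] = P(Y¹=k). -/
/-!
Write `p = E[Z | X]`, which agrees a.e. with `π(X)` and is bounded below by `δ`. Since
`(m/π)(X)` is bounded and `σ(X)`-measurable, pulling it out of the conditional expectation shows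
that the augmentation term `((Z − p)/p)·m(X)` has mean zero, whatever `m` is. On `{Z = 1}`
consistency gives `Y = Y¹`, so the first term is `1{Y¹ = k, Z = 1}/p`; conditional
independence factors `P(Y¹ = k, Z = 1 | X) = P(Y¹ = k | X)·p`, and the factor `p` cancels,
leaving `E[P(Y¹ = k | X)] = P(Y¹ = k)`.
-/

open MeasureTheory ProbabilityTheory

lemma norm_inv_le_inv_of_le {δ x : ℝ} (hδ : 0 < δ) (hx : δ ≤ x) : ‖x⁻¹‖ ≤ δ⁻¹ := by
  rw [norm_inv, Real.norm_of_nonneg (hδ.le.trans hx)]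
  exact inv_anti₀ hδ hx

section PullOut

variable {Ω : Type*} {m m₀ : MeasurableSpace Ω} {μ : Measure Ω} [IsFiniteMeasure μ]

theorem integral_mul_condExp_of_bound (hm : m ≤ m₀) {f g : Ω → ℝ}
    (hg : StronglyMeasurable[m] g) (hf : Integrable f μ) (C : ℝ)
    (hgC : ∀ᵐ ω ∂μ, ‖g ω‖ ≤ C) :
    ∫ ω, g ω * μ[f | m] ω ∂μ = ∫ ω, g ω * f ω ∂μ := by
  rw [← integral_condExp hm (f := fun ω => g ω * f ω)]
  exact integral_congr_ae (condExp_stronglyMeasurable_mul_of_bound hm hg hf C hgC).symm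

theorem integral_mul_sub_condExp_eq_zero (hm : m ≤ m₀) {f g : Ω → ℝ}
    (hg : StronglyMeasurable[m] g) (hf : Integrable f μ) (C : ℝ)
    (hgC : ∀ᵐ ω ∂μ, ‖g ω‖ ≤ C) :
    ∫ ω, g ω * (f ω - μ[f | m] ω) ∂μ = 0 := by
  have hg' : AEStronglyMeasurable g μ := (hg.mono hm).aestronglyMeasurable
  simp_rw [mul_sub]
  rw [integral_sub (hf.bdd_mul hg' hgC) (integrable_condExp.bdd_mul hg' hgC),
    integral_mul_condExp_of_bound hm hg hf C hgC, sub_self]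

theorem integral_inv_condExp_mul_indicator_inter (hm : m ≤ m₀) {s t : Set Ω}
    (hs : MeasurableSet s) (ht : MeasurableSet t)
    (hst : μ⟦s ∩ t | m⟧ =ᵐ[μ] fun ω => (μ⟦s | m⟧) ω * (μ⟦t | m⟧) ω) {δ : ℝ} (hδ : 0 < δ)
    (htδ : ∀ᵐ ω ∂μ, δ ≤ (μ⟦t | m⟧) ω) :
    ∫ ω, ((μ⟦t | m⟧) ω)⁻¹ * (s ∩ t).indicator (fun _ => (1 : ℝ)) ω ∂μ = μ.real s := by
  have hinv : ∀ᵐ ω ∂μ, ‖((μ⟦t | m⟧) ω)⁻¹‖ ≤ δ⁻¹ := by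
    filter_upwards [htδ] with ω hω using norm_inv_le_inv_of_le hδ hω
  rw [← integral_mul_condExp_of_bound hm (g := fun ω => ((μ⟦t | m⟧) ω)⁻¹)
    stronglyMeasurable_condExp.measurable.inv.stronglyMeasurable
    ((integrable_const 1).indicator (hs.inter ht)) δ⁻¹ hinv]
  calc ∫ ω, ((μ⟦t | m⟧) ω)⁻¹ * (μ⟦s ∩ t | m⟧) ω ∂μ = ∫ ω, (μ⟦s | m⟧) ω ∂μ := by
        refine integral_congr_ae ?_
        filter_upwards [hst, htδ] with ω hω hωδ
        rw [hω, mul_comm, mul_assoc, mul_inv_cancel₀ (hδ.trans_le hωδ).ne', mul_one]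
    _ = μ.real s := by rw [integral_condExp hm]; exact integral_indicator_one hs

/-- The augmented inverse-probability-weighted (AIPW) estimator of `P(s)`, with treatment event
`t`, propensity `μ⟦t | m⟧` and an arbitrary bounded outcome model `g`. -/
theorem integral_aipw_eq_measureReal (hm : m ≤ m₀) {s t : Set Ω}
    (hs : MeasurableSet s) (ht : MeasurableSet t)
    (hst : μ⟦s ∩ t | m⟧ =ᵐ[μ] fun ω => (μ⟦s | m⟧) ω * (μ⟦t | m⟧) ω) {δ : ℝ} (hδ : 0 < δ)
    (htδ : ∀ᵐ ω ∂μ, δ ≤ (μ⟦t | m⟧) ω) {g : Ω → ℝ} (hg : StronglyMeasurable[m] g) (C : ℝ)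
    (hgC : ∀ᵐ ω ∂μ, ‖g ω‖ ≤ C) :
    ∫ ω, ((s ∩ t).indicator (fun _ => (1 : ℝ)) ω -
        (t.indicator (fun _ => (1 : ℝ)) ω - (μ⟦t | m⟧) ω) * g ω) / (μ⟦t | m⟧) ω ∂μ =
      μ.real s := by
  set p := μ⟦t | m⟧
  have hpinv : ∀ᵐ ω ∂μ, ‖(p ω)⁻¹‖ ≤ δ⁻¹ := by
    filter_upwards [htδ] with ω hω using norm_inv_le_inv_of_le hδ hω
  have hp_sm : StronglyMeasurable[m] (fun ω => (p ω)⁻¹) :=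
    stronglyMeasurable_condExp.measurable.inv.stronglyMeasurable
  have hgp_sm : StronglyMeasurable[m] (fun ω => g ω * (p ω)⁻¹) := hg.mul hp_sm
  have hgpC : ∀ᵐ ω ∂μ, ‖g ω * (p ω)⁻¹‖ ≤ C * δ⁻¹ := by
    filter_upwards [hgC, hpinv] with ω h₁ h₂ using norm_mul_le_of_le h₁ h₂
  have ht_int : Integrable (t.indicator fun _ => (1 : ℝ)) μ := (integrable_const 1).indicator ht
  have hipw_int : Integrable (fun ω => (p ω)⁻¹ * (s ∩ t).indicator (fun _ => (1 : ℝ)) ω) μ :=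
    ((integrable_const 1).indicator (hs.inter ht)).bdd_mul
      (hp_sm.mono hm).aestronglyMeasurable hpinv
  have haug_int : Integrable
      (fun ω => g ω * (p ω)⁻¹ * (t.indicator (fun _ => (1 : ℝ)) ω - p ω)) μ :=
    (ht_int.sub integrable_condExp).bdd_mul (hgp_sm.mono hm).aestronglyMeasurable hgpC
  calc _ = ∫ ω, (p ω)⁻¹ * (s ∩ t).indicator (fun _ => (1 : ℝ)) ω -
        g ω * (p ω)⁻¹ * (t.indicator (fun _ => (1 : ℝ)) ω - p ω) ∂μ := by
        congr 1 with ω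
        ring
    _ = μ.real s := by
        rw [integral_sub hipw_int haug_int, integral_inv_condExp_mul_indicator_inter hm hs ht hst
          hδ htδ, integral_mul_sub_condExp_eq_zero hm hgp_sm ht_int _ hgpC, sub_zero]

end PullOut

section Binary

variable {Ω : Type*} {K : ℕ} {Z : Ω → ℝ}

lemma indicator_preimage_one_eq_self_of_binary (hbin : ∀ ω, Z ω = 0 ∨ Z ω = 1) :
    (Z ⁻¹' {1}).indicator (fun _ => (1 : ℝ)) = Z := by
  funext ω
  rcases hbin ω with h | h <;> simp [Set.indicator, h]

lemma mul_ite_eq_indicator_of_consistent (hbin : ∀ ω, Z ω = 0 ∨ Z ω = 1) {Y Y1 : Ω → Fin K}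
    (hconsist : ∀ ω, Z ω = 1 → Y ω = Y1 ω) (k : Fin K) (ω : Ω) :
    Z ω * (if Y ω = k then (1 : ℝ) else 0) =
      (Y1 ⁻¹' {k} ∩ Z ⁻¹' {1}).indicator (fun _ => (1 : ℝ)) ω := by
  rcases hbin ω with h | h
  · simp [Set.indicator, h]
  · simp [Set.indicator, h, hconsist ω h]

end Binary

theorem doubly_robust_propensity_correct_general {Ω 𝓧 : Type*} [MeasurableSpace Ω]
    [StandardBorelSpace Ω] [m𝓧 : MeasurableSpace 𝓧] {μ : Measure Ω}
    [IsProbabilityMeasure μ] {K : ℕ}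
    (X : Ω → 𝓧) (Z : Ω → ℝ) (Y Y1 Y0 : Ω → Fin K) (π : 𝓧 → ℝ) (m : 𝓧 → ℝ) (δ : ℝ)
    (hX : Measurable X) (hZ : Measurable Z) (hY1 : Measurable Y1)
    (hm : Measurable m) (hmbdd : ∃ C : ℝ, ∀ x, |m x| ≤ C)
    (hbin : ∀ ω, Z ω = 0 ∨ Z ω = 1)
    (hconsist : ∀ ω, Z ω = 1 → Y ω = Y1 ω)
    (hδ : 0 < δ)
    (hpos : ∀ᵐ ω ∂μ, δ ≤ π (X ω) ∧ π (X ω) ≤ 1 - δ)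
    (hprop : (fun ω => π (X ω)) =ᵐ[μ] μ[Z | MeasurableSpace.comap X m𝓧])
    (hignor : CondIndepFun (MeasurableSpace.comap X m𝓧) hX.comap_le
      (fun ω => (Y1 ω, Y0 ω)) Z μ)
    (k : Fin K) :
    ∫ ω, Z ω * (if Y ω = k then (1 : ℝ) else 0) / π (X ω) -
        ((Z ω - π (X ω)) / π (X ω)) * m (X ω) ∂μ = (μ (Y1 ⁻¹' {k})).toReal := by
  obtain ⟨C, hC⟩ := hmbdd
  have hZ_eq := indicator_preimage_one_eq_self_of_binary hbin
  have hpδ : ∀ᵐ ω ∂μ, δ ≤ (μ⟦Z ⁻¹' {1} | MeasurableSpace.comap X m𝓧⟧) ω := by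
    rw [hZ_eq]
    filter_upwards [hpos, hprop] with ω hω hπ using hπ ▸ hω.1
  have hci := (condIndepFun_iff_condExp_inter_preimage_eq_mul hY1 hZ).1
    (hignor.comp measurable_fst measurable_id) _ _ (measurableSet_singleton k)
    (measurableSet_singleton 1)
  rw [← measureReal_def, ← integral_aipw_eq_measureReal hX.comap_le
    (hY1 (measurableSet_singleton k)) (hZ (measurableSet_singleton 1)) hci hδ hpδ
    ((hm.comp (comap_measurable X)).stronglyMeasurable) C (ae_of_all _ fun ω => hC (X ω))]
  refine integral_congr_ae ?_
  filter_upwards [hprop] with ω hπ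
  rw [hZ_eq, ← hπ, mul_ite_eq_indicator_of_consistent hbin hconsist, Function.comp_apply]
  ring

/-- double robustness when the propensity model is correct. If `π(X)`
is the true propensity score and `m` is any bounded measurable (possibly
misspecified) outcome function, then
`E[Z·1{Y=k}/π(X) − ((Z−π(X))/π(X))·m(X)] = P(Y¹=k)`. -/
theorem doubly_robust_propensity_correct {Ω 𝓧 : Type*} [MeasurableSpace Ω]
    [StandardBorelSpace Ω] [m𝓧 : MeasurableSpace 𝓧] {μ : Measure Ω}
    [IsProbabilityMeasure μ] {K : ℕ}
    (X : Ω → 𝓧) (Z : Ω → ℝ) (Y Y1 Y0 : Ω → Fin K) (π : 𝓧 → ℝ) (m : 𝓧 → ℝ) (δ : ℝ)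
    (hX : Measurable X) (hZ : Measurable Z) (hY1 : Measurable Y1) (hY0 : Measurable Y0)
    (hm : Measurable m) (hmbdd : ∃ C : ℝ, ∀ x, |m x| ≤ C)
    (hbin : ∀ ω, Z ω = 0 ∨ Z ω = 1)
    (hconsist : ∀ ω, Z ω = 1 → Y ω = Y1 ω)
    (hδ : 0 < δ) (hδ1 : δ < 1)
    (hpos : ∀ᵐ ω ∂μ, δ ≤ π (X ω) ∧ π (X ω) ≤ 1 - δ)
    (hprop : (fun ω => π (X ω)) =ᵐ[μ] μ[Z | MeasurableSpace.comap X m𝓧])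
    (hignor : CondIndepFun (MeasurableSpace.comap X m𝓧) hX.comap_le
      (fun ω => (Y1 ω, Y0 ω)) Z μ)
    (k : Fin K) :
    ∫ ω, Z ω * (if Y ω = k then (1 : ℝ) else 0) / π (X ω) -
        ((Z ω - π (X ω)) / π (X ω)) * m (X ω) ∂μ = (μ (Y1 ⁻¹' {k})).toReal :=
  doubly_robust_propensity_correct_general (m𝓧 := m𝓧) X Z Y Y1 Y0 π m δ hX hZ hY1 hm hmbdd hbin
    hconsist hδ hpos hprop hignor k
end

section
/- Double robustness (outcome model correct): if m₁ₖ(X) = P(Y¹=k | X) is the true conditional outcome probability and e(X) is any measurable function with δ ≤ e(X) ≤ 1−δ (possibly not the true propensity score), then E[ Z·1{Y=k}/e(X) − ((Z−e(X))/e(X))·m₁ₖ(X) ] = P(Y¹=k). -/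
/-!
With `W = 1{Y¹ = k}`, consistency turns the integrand into
`m₁ₖ(X) + Z (W - m₁ₖ(X)) / e(X)`. Conditional ignorability gives
`E[Z W | X] = E[Z | X] E[W | X] = E[Z | X] m₁ₖ(X)`, so `Z (W - m₁ₖ(X))` has conditional mean
zero given `X`; as `1 / e(X)` is bounded and `X`-measurable, the correction term integrates to
zero whatever `e` is, leaving `E[m₁ₖ(X)] = E[W] = P(Y¹ = k)`.
-/

open MeasureTheory ProbabilityTheory

section ConditionalOrthogonality

variable {Ω : Type*} {m mΩ : MeasurableSpace Ω} {μ : Measure Ω} [IsFiniteMeasure μ]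

theorem condExp_mul_sub_ae_eq_zero {U V h : Ω → ℝ} {c : ℝ}
    (hU : AEStronglyMeasurable U μ) (hUc : ∀ᵐ ω ∂μ, ‖U ω‖ ≤ c) (hV : Integrable V μ)
    (hh : StronglyMeasurable[m] h) (hhV : h =ᵐ[μ] μ[V|m])
    (hUV : μ[U * V|m] =ᵐ[μ] μ[U|m] * μ[V|m]) :
    μ[U * (V - h)|m] =ᵐ[μ] 0 := by
  have hh_int : Integrable h μ := integrable_condExp.congr hhV.symm
  have hU_int : Integrable U μ := (integrable_const c).mono' hU hUc
  have hUV_int : Integrable (U * V) μ := hV.bdd_mul hU hUc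
  have hhU_int : Integrable (h * U) μ := mul_comm U h ▸ hh_int.bdd_mul hU hUc
  calc μ[U * (V - h)|m] = μ[U * V - h * U|m] := by rw [mul_sub, mul_comm U h]
    _ =ᵐ[μ] μ[U * V|m] - μ[h * U|m] := condExp_sub hUV_int hhU_int m
    _ =ᵐ[μ] μ[U|m] * μ[V|m] - h * μ[U|m] :=
      hUV.sub (condExp_mul_of_stronglyMeasurable_left hh hhU_int hU_int)
    _ =ᵐ[μ] 0 := by
      filter_upwards [hhV] with ω hω
      simp [hω, mul_comm]

theorem integral_mul_eq_zero_of_condExp_ae_eq_zero (hm : m ≤ mΩ) {g F : Ω → ℝ} {c : ℝ}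
    (hg : StronglyMeasurable[m] g) (hgc : ∀ᵐ ω ∂μ, ‖g ω‖ ≤ c) (hF : Integrable F μ)
    (hF0 : μ[F|m] =ᵐ[μ] 0) :
    ∫ ω, g ω * F ω ∂μ = 0 := by
  calc ∫ ω, g ω * F ω ∂μ = ∫ ω, μ[g * F|m] ω ∂μ := (integral_condExp hm).symm
    _ = ∫ ω, (g * μ[F|m]) ω ∂μ :=
      integral_congr_ae (condExp_stronglyMeasurable_mul_of_bound hm hg hF c hgc)
    _ = 0 := by
      rw [integral_congr_ae (Filter.EventuallyEq.rfl.mul hF0)]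
      simp

theorem integral_add_mul_mul_sub_condExp (hm : m ≤ mΩ) {g U V h : Ω → ℝ} {c c' : ℝ}
    (hg : StronglyMeasurable[m] g) (hgc : ∀ᵐ ω ∂μ, ‖g ω‖ ≤ c)
    (hU : AEStronglyMeasurable U μ) (hUc : ∀ᵐ ω ∂μ, ‖U ω‖ ≤ c') (hV : Integrable V μ)
    (hh : StronglyMeasurable[m] h) (hhV : h =ᵐ[μ] μ[V|m])
    (hUV : μ[U * V|m] =ᵐ[μ] μ[U|m] * μ[V|m]) :
    ∫ ω, h ω + g ω * (U ω * (V ω - h ω)) ∂μ = ∫ ω, V ω ∂μ := by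
  have hh_int : Integrable h μ := integrable_condExp.congr hhV.symm
  have hF_int : Integrable (fun ω => U ω * (V ω - h ω)) μ := (hV.sub hh_int).bdd_mul hU hUc
  rw [integral_add hh_int (hF_int.bdd_mul (hg.mono hm).aestronglyMeasurable hgc),
    integral_mul_eq_zero_of_condExp_ae_eq_zero hm hg hgc hF_int
      (condExp_mul_sub_ae_eq_zero hU hUc hV hh hhV hUV),
    add_zero, integral_congr_ae hhV, integral_condExp hm]

end ConditionalOrthogonality

theorem ProbabilityTheory.CondIndepFun.condExp_indicator_mul_indicator {Ω β β' : Type*}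
    {m mΩ : MeasurableSpace Ω} [StandardBorelSpace Ω] {μ : Measure Ω} [IsFiniteMeasure μ]
    {hm : m ≤ mΩ} {_ : MeasurableSpace β} {_ : MeasurableSpace β'} {f : Ω → β} {g : Ω → β'}
    (hfg : CondIndepFun m hm f g μ) (hf : Measurable f) (hg : Measurable g)
    {s : Set β} {t : Set β'} (hs : MeasurableSet s) (ht : MeasurableSet t) :
    μ[(f ⁻¹' s).indicator (1 : Ω → ℝ) * (g ⁻¹' t).indicator 1|m] =ᵐ[μ]
      μ[(f ⁻¹' s).indicator 1|m] * μ[(g ⁻¹' t).indicator 1|m] := by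
  rw [← Set.inter_indicator_one]
  exact (condIndepFun_iff_condExp_inter_preimage_eq_mul hf hg).1 hfg s t hs ht

theorem indicator_preimage_one_eq_self {Ω : Type*} {Z : Ω → ℝ} (hZ : ∀ ω, Z ω = 0 ∨ Z ω = 1) :
    (Z ⁻¹' {1}).indicator (1 : Ω → ℝ) = Z := by
  funext ω
  rcases hZ ω with h | h <;> simp [h]

theorem mul_div_sub_sub_div_mul_eq_add_inv_mul {z a b e r : ℝ} (he : e ≠ 0)
    (hab : z * a = z * b) :
    z * a / e - (z - e) / e * r = r + e⁻¹ * (z * (b - r)) := by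
  rw [hab]
  field_simp
  ring

theorem doubly_robust_outcome_correct_general {Ω 𝓧 : Type*} [MeasurableSpace Ω]
    [StandardBorelSpace Ω] [m𝓧 : MeasurableSpace 𝓧] {μ : Measure Ω}
    [IsProbabilityMeasure μ] {K : ℕ}
    (X : Ω → 𝓧) (Z : Ω → ℝ) (Y Y1 Y0 : Ω → Fin K) (e m1k : 𝓧 → ℝ) (δ : ℝ)
    (hX : Measurable X) (hZ : Measurable Z) (hY1 : Measurable Y1)
    (he : Measurable e) (hm1k : Measurable m1k)
    (hbin : ∀ ω, Z ω = 0 ∨ Z ω = 1)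
    (hconsist : ∀ ω, Z ω = 1 → Y ω = Y1 ω)
    (hδ : 0 < δ)
    (hebound : ∀ x, δ ≤ e x ∧ e x ≤ 1 - δ)
    (hignor : CondIndepFun (MeasurableSpace.comap X m𝓧) hX.comap_le
      (fun ω => (Y1 ω, Y0 ω)) Z μ)
    (k : Fin K)
    (houtcome : (fun ω => m1k (X ω)) =ᵐ[μ]
      μ[fun ω => if Y1 ω = k then (1 : ℝ) else 0 | MeasurableSpace.comap X m𝓧]) :
    ∫ ω, Z ω * (if Y ω = k then (1 : ℝ) else 0) / e (X ω) -
        ((Z ω - e (X ω)) / e (X ω)) * m1k (X ω) ∂μ = (μ (Y1 ⁻¹' {k})).toReal := by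
  set W : Ω → ℝ := (Y1 ⁻¹' {k}).indicator 1
  have hW : (fun ω => if Y1 ω = k then (1 : ℝ) else 0) = W := by
    funext ω; by_cases h : Y1 ω = k <;> simp [W, h]
  rw [hW] at houtcome
  have hXm : Measurable[MeasurableSpace.comap X m𝓧] X := comap_measurable X
  have hfac : μ[Z * W|MeasurableSpace.comap X m𝓧] =ᵐ[μ]
      μ[Z|MeasurableSpace.comap X m𝓧] * μ[W|MeasurableSpace.comap X m𝓧] := by
    have hZY1 : CondIndepFun (MeasurableSpace.comap X m𝓧) hX.comap_le Z Y1 μ :=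
      (hignor.comp measurable_fst measurable_id).symm
    have := hZY1.condExp_indicator_mul_indicator hZ hY1 (measurableSet_singleton 1)
      (measurableSet_singleton k)
    rwa [indicator_preimage_one_eq_self hbin] at this
  have hinv_le : ∀ ω, ‖(e (X ω))⁻¹‖ ≤ δ⁻¹ := fun ω => by
    have hδe := (hebound (X ω)).1
    rw [norm_inv, Real.norm_of_nonneg (hδ.le.trans hδe)]
    exact inv_anti₀ hδ hδe
  have hZ_le : ∀ ω, ‖Z ω‖ ≤ 1 := fun ω => by rcases hbin ω with h | h <;> simp [h]
  have hZY : ∀ ω, Z ω * (if Y ω = k then (1 : ℝ) else 0) = Z ω * W ω := fun ω => by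
    rcases hbin ω with h | h <;> simp [h, hconsist, ← hW]
  have hW_int : Integrable W μ := (integrable_const 1).indicator (hY1 (measurableSet_singleton k))
  calc _ = ∫ ω, m1k (X ω) + (e (X ω))⁻¹ * (Z ω * (W ω - m1k (X ω))) ∂μ :=
        integral_congr_ae <| .of_forall fun ω => mul_div_sub_sub_div_mul_eq_add_inv_mul
          (hδ.trans_le (hebound (X ω)).1).ne' (hZY ω)
    _ = ∫ ω, W ω ∂μ :=
        integral_add_mul_mul_sub_condExp hX.comap_le (he.comp hXm).inv.stronglyMeasurable
          (.of_forall hinv_le) hZ.aestronglyMeasurable (.of_forall hZ_le) hW_int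
          (hm1k.comp hXm).stronglyMeasurable houtcome hfac
    _ = μ.real (Y1 ⁻¹' {k}) := integral_indicator_one (hY1 (measurableSet_singleton k))

/-- double robustness when the outcome model is correct. If
`m₁ₖ(X)` is a version of `P(Y¹=k | X)` and `e` is any measurable function with
`δ ≤ e ≤ 1-δ` (possibly not the true propensity score), then
`E[Z·1{Y=k}/e(X) − ((Z−e(X))/e(X))·m₁ₖ(X)] = P(Y¹=k)`. -/
theorem doubly_robust_outcome_correct {Ω 𝓧 : Type*} [MeasurableSpace Ω]
    [StandardBorelSpace Ω] [m𝓧 : MeasurableSpace 𝓧] {μ : Measure Ω}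
    [IsProbabilityMeasure μ] {K : ℕ}
    (X : Ω → 𝓧) (Z : Ω → ℝ) (Y Y1 Y0 : Ω → Fin K) (π e m1k : 𝓧 → ℝ) (δ : ℝ)
    (hX : Measurable X) (hZ : Measurable Z) (hY1 : Measurable Y1) (hY0 : Measurable Y0)
    (he : Measurable e) (hm1k : Measurable m1k)
    (hbin : ∀ ω, Z ω = 0 ∨ Z ω = 1)
    (hconsist : ∀ ω, Z ω = 1 → Y ω = Y1 ω)
    (hδ : 0 < δ) (hδhalf : δ < 1 / 2)
    (hebound : ∀ x, δ ≤ e x ∧ e x ≤ 1 - δ)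
    (hpos : ∀ᵐ ω ∂μ, δ ≤ π (X ω) ∧ π (X ω) ≤ 1 - δ)
    (hprop : (fun ω => π (X ω)) =ᵐ[μ] μ[Z | MeasurableSpace.comap X m𝓧])
    (hignor : CondIndepFun (MeasurableSpace.comap X m𝓧) hX.comap_le
      (fun ω => (Y1 ω, Y0 ω)) Z μ)
    (k : Fin K)
    (houtcome : (fun ω => m1k (X ω)) =ᵐ[μ]
      μ[fun ω => if Y1 ω = k then (1 : ℝ) else 0 | MeasurableSpace.comap X m𝓧]) :
    ∫ ω, Z ω * (if Y ω = k then (1 : ℝ) else 0) / e (X ω) -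
        ((Z ω - e (X ω)) / e (X ω)) * m1k (X ω) ∂μ = (μ (Y1 ⁻¹' {k})).toReal :=
  doubly_robust_outcome_correct_general (m𝓧 := m𝓧) X Z Y Y1 Y0 e m1k δ hX hZ hY1 he hm1k hbin
    hconsist hδ hebound hignor k houtcome
end

section
/- D is bilinear and monotone: if probability vector p₁' is obtained from p₁ by moving mass ε > 0 from category j to a higher category j' > j, then D(p₁', p₀) ≥ D(p₁, p₀), with equality if and only if p₀ places no mass on the interval {j, j+1, …, j'}. -/
open Finset

theorem Finset.sum_Iio_add_sum_Ico {α M : Type*} [LinearOrder α] [LocallyFiniteOrder α]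
    [LocallyFiniteOrderBot α] [AddCommMonoid M] (f : α → M) {a b : α} (h : a ≤ b) :
    ∑ x ∈ Iio a, f x + ∑ x ∈ Ico a b, f x = ∑ x ∈ Iio b, f x := by
  rw [← sum_union (disjoint_left.2 fun x hxa hxab => (mem_Iio.1 hxa).not_ge (mem_Ico.1 hxab).1)]
  congr 1
  exact coe_injective (by push_cast; exact Set.Iio_union_Ico_eq_Iio h)

theorem Fintype.sum_update_mul {ι R : Type*} [Fintype ι] [DecidableEq ι] [CommRing R]
    (f g : ι → R) (a : ι) (b : R) :
    ∑ k, Function.update f a b k * g k = ∑ k, f k * g k + (b - f a) * g a := by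
  have h : ∀ k, Function.update f a b k * g k =
      f k * g k + (Pi.single a ((b - f a) * g a) : ι → R) k := by
    intro k
    rcases eq_or_ne k a with rfl | hk
    · simp only [Function.update_self, Pi.single_eq_same]; ring
    · simp only [Function.update_of_ne hk, Pi.single_eq_of_ne hk, add_zero]
  simp only [h, sum_add_distrib, Fintype.sum_pi_single']

section midCdf

variable {α : Type*} [LinearOrder α] [LocallyFiniteOrderBot α]

noncomputable def midCdf (p : α → ℝ) (k : α) : ℝ :=
  ∑ l ∈ Iio k, p l + p k / 2

variable [LocallyFiniteOrder α] {p : α → ℝ} {a b : α}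

theorem midCdf_sub_midCdf (p : α → ℝ) (h : a ≤ b) :
    midCdf p b - midCdf p a = (∑ l ∈ Ico a b, p l + ∑ l ∈ Ioc a b, p l) / 2 := by
  have hIcc : p b + ∑ l ∈ Ico a b, p l = p a + ∑ l ∈ Ioc a b, p l := by
    rw [← sum_insert right_notMem_Ico, ← sum_insert left_notMem_Ioc, Ico_insert_right h,
      Ioc_insert_left h]
  rw [midCdf, midCdf, ← sum_Iio_add_sum_Ico p h]
  linarith

theorem midCdf_mono (hp : 0 ≤ p) : Monotone (midCdf p) := fun a b h => by
  have := midCdf_sub_midCdf p h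
  have := sum_nonneg fun l (_ : l ∈ Ico a b) => hp l
  have := sum_nonneg fun l (_ : l ∈ Ioc a b) => hp l
  linarith

theorem midCdf_eq_midCdf_iff (hp : 0 ≤ p) (h : a < b) :
    midCdf p b = midCdf p a ↔ ∀ l, a ≤ l → l ≤ b → p l = 0 := by
  rw [← sub_eq_zero, midCdf_sub_midCdf p h.le, div_eq_zero_iff, or_iff_left two_ne_zero,
    add_eq_zero_iff_of_nonneg (sum_nonneg fun l _ => hp l) (sum_nonneg fun l _ => hp l),
    sum_eq_zero_iff_of_nonneg fun l _ => hp l, sum_eq_zero_iff_of_nonneg fun l _ => hp l]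
  constructor
  · rintro ⟨hIco, hIoc⟩ l hal hlb
    rcases hlb.lt_or_eq with hlb | rfl
    · exact hIco l (mem_Ico.2 ⟨hal, hlb⟩)
    · exact hIoc l (mem_Ioc.2 ⟨h, le_rfl⟩)
  · intro hzero
    exact ⟨fun l hl => hzero l (mem_Ico.1 hl).1 (mem_Ico.1 hl).2.le,
      fun l hl => hzero l (mem_Ioc.1 hl).1.le (mem_Ioc.1 hl).2⟩

end midCdf

theorem DOOR_eq_sum_mul_midCdf {K : ℕ} (p1 p0 : Fin K → ℝ) :
    DOOR p1 p0 = ∑ k, p1 k * midCdf p0 k := by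
  simp only [DOOR, midCdf, mul_add, sum_add_distrib, mul_sum]
  congr 1
  exact sum_congr rfl fun k _ => by ring

theorem DOOR_update {K : ℕ} (p1 p0 : Fin K → ℝ) (a : Fin K) (b : ℝ) :
    DOOR (Function.update p1 a b) p0 = DOOR p1 p0 + (b - p1 a) * midCdf p0 a := by
  simp only [DOOR_eq_sum_mul_midCdf, Fintype.sum_update_mul]

theorem DOOR_shift {K : ℕ} (p1 p0 : Fin K → ℝ) {j j' : Fin K} (h : j ≠ j') (ε : ℝ) :
    DOOR (Function.update (Function.update p1 j (p1 j - ε)) j' (p1 j' + ε)) p0 =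
      DOOR p1 p0 + ε * (midCdf p0 j' - midCdf p0 j) := by
  rw [DOOR_update, DOOR_update, Function.update_of_ne h.symm]
  ring

theorem door_monotone_mass_shift_general {K : ℕ} (p1 p0 : Fin K → ℝ) (j j' : Fin K) (ε : ℝ)
    (hε : 0 < ε) (hjj' : j < j') (h0nonneg : ∀ k, 0 ≤ p0 k) :
    DOOR (Function.update (Function.update p1 j (p1 j - ε)) j' (p1 j' + ε)) p0 ≥ DOOR p1 p0 ∧
      (DOOR (Function.update (Function.update p1 j (p1 j - ε)) j' (p1 j' + ε)) p0 = DOOR p1 p0 ↔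
        ∀ l : Fin K, j ≤ l → l ≤ j' → p0 l = 0) := by
  rw [DOOR_shift p1 p0 hjj'.ne]
  constructor
  · exact le_add_of_nonneg_right (mul_nonneg hε.le (sub_nonneg.2 (midCdf_mono h0nonneg hjj'.le)))
  · rw [add_eq_left, mul_eq_zero, or_iff_right hε.ne', sub_eq_zero]
    exact midCdf_eq_midCdf_iff h0nonneg hjj'

/-- moving mass `ε > 0` from category `j` to a higher category `j' > j`
cannot decrease the DOOR probability, with equality iff `p₀` places no mass on
`{j, j+1, …, j'}`. -/
theorem door_monotone_mass_shift {K : ℕ} (p1 p0 : Fin K → ℝ) (j j' : Fin K) (ε : ℝ)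
    (hε : 0 < ε) (hjj' : j < j') (hshift : 0 ≤ p1 j - ε)
    (h1nonneg : ∀ k, 0 ≤ p1 k) (h0nonneg : ∀ k, 0 ≤ p0 k)
    (h1sum : ∑ k, p1 k = 1) (h0sum : ∑ k, p0 k = 1) :
    DOOR (Function.update (Function.update p1 j (p1 j - ε)) j' (p1 j' + ε)) p0 ≥ DOOR p1 p0 ∧
      (DOOR (Function.update (Function.update p1 j (p1 j - ε)) j' (p1 j' + ε)) p0 = DOOR p1 p0 ↔
        ∀ l : Fin K, j ≤ l → l ≤ j' → p0 l = 0) :=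
  door_monotone_mass_shift_general p1 p0 j j' ε hε hjj' h0nonneg
end
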